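/- Let K be a commutative ring with unity and A a finite alphabet. Then the kernel of λ equals the orthogonal complement L_K(A)^⊥ of the free Lie algebra with respect to the canonical scalar product; in particular, a word w ∈ A* satisfies λ(w) = 0 if and only if w does not lie in the support of L_K(A). -/

import Mathlib

open scoped BigOperators
open Classical

attribute [local instance 100] LieRing.ofAssociativeRing

noncomputable section

/-- The free associative algebra `K⟨A⟩` on the alphabet `A`, realized as the monoid algebra
of the free monoid on `A`. -/
abbrev NC (K A : Type*) [CommRing K] : Type _ := MonoidAlgebra K (FreeMonoid A)

variable (K A : Type*) [CommRing K]

/-- The monomial (word) `w` viewed as an element of `K⟨A⟩`. -/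
def wp (w : List A) : NC K A := MonoidAlgebra.single (FreeMonoid.ofList w) 1

/-- The coefficient `(P, w)` of the word `w` in the polynomial `P`. -/
def coeffW (P : NC K A) (w : List A) : K := P.coeff (FreeMonoid.ofList w)

/-- The canonical scalar product `(P, Q) = ∑_w (P, w)(Q, w)` on `K⟨A⟩`. -/
def sp (P Q : NC K A) : K := Finsupp.sum P.coeff fun w c => c * Q.coeff w

/-- The free Lie algebra `L_K(A)`: the Lie subalgebra of `K⟨A⟩` (with the commutator
bracket) generated by the letters. -/
def freeLie : LieSubalgebra K (NC K A) :=
  LieSubalgebra.lieSpan K (NC K A) (Set.range fun a : A => wp K A [a])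

/-- The adjoint `λ` of the left-normed Lie bracketing, on words:
`λ(ε) = 0`, `λ(a) = a`, `λ(aub) = λ(au)b − λ(ub)a`. -/
def lam : List A → NC K A
  | [] => 0
  | [a] => wp K A [a]
  | a :: b :: t =>
      lam (a :: (b :: t).dropLast) * wp K A [(b :: t).getLast (by simp)] -
        lam (b :: t) * wp K A [a]
  termination_by w => w.length
  decreasing_by
    all_goals simp [List.length_dropLast]

/-- `λ` extended linearly to the whole of `K⟨A⟩`. -/
def lamLin : NC K A →ₗ[K] NC K A :=
  (Finsupp.linearCombination K fun w : FreeMonoid A => lam K A (FreeMonoid.toList w)) ∘ₗ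
    (MonoidAlgebra.coeffLinearEquiv K).toLinearMap

/-- The shuffle product of two words, as an element of `K⟨A⟩`. -/
def shuffleW : List A → List A → NC K A
  | [], v => wp K A v
  | u, [] => wp K A u
  | a :: u, b :: v =>
      wp K A [a] * shuffleW u (b :: v) + wp K A [b] * shuffleW (a :: u) v
  termination_by u v => u.length + v.length
  decreasing_by
    all_goals simp [Nat.lt_succ_iff]

/-- The shuffle product on `K⟨A⟩`, extended bilinearly. -/
def sh (P Q : NC K A) : NC K A :=
  Finsupp.sum P.coeff fun u cu =>
    Finsupp.sum Q.coeff fun v cv =>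
      (cu * cv) • shuffleW K A (FreeMonoid.toList u) (FreeMonoid.toList v)

/-- The right residual `P ▷ q` of `P` by a word `q`: `(P ▷ q, w) = (P, qw)`. -/
def rresW (P : NC K A) (q : List A) : NC K A :=
  Finsupp.sum P.coeff fun u c =>
    if q <+: FreeMonoid.toList u then c • wp K A ((FreeMonoid.toList u).drop q.length) else 0

/-- The right residual `P ▷ Q`: `(P ▷ Q, w) = (P, Qw)`. -/
def rres (P Q : NC K A) : NC K A :=
  Finsupp.sum Q.coeff fun v c => c • rresW K A P (FreeMonoid.toList v)

/-- Auxiliary left residual by a word `q`: `(q ◁ P, w) = (P, wq)`. -/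
def lresW (P : NC K A) (q : List A) : NC K A :=
  Finsupp.sum P.coeff fun u c =>
    if q <:+ FreeMonoid.toList u then
      c • wp K A ((FreeMonoid.toList u).take ((FreeMonoid.toList u).length - q.length))
    else 0

/-- The left residual `Q ◁ P`: `(Q ◁ P, w) = (P, wQ)`. -/
def lres (Q P : NC K A) : NC K A :=
  Finsupp.sum Q.coeff fun v c => c • lresW K A P (FreeMonoid.toList v)

/-- The number of trailing occurrences of the letter `a` in the word `v`. -/
def trailCount (a : A) (v : FreeMonoid A) : ℕ :=
  ((FreeMonoid.toList v).reverse.takeWhile fun x => decide (x = a)).length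

/-- `d(P)`: the least number of trailing `a`'s among the words in the support of `P`. -/
def dP (a : A) (P : NC K A) : ℕ :=
  sInf {n : ℕ | ∃ v ∈ Finsupp.support P.coeff, trailCount A a v = n}

/-- `e(P)`: the largest number of trailing `a`'s among the words in the support of `P`. -/
def eP (a : A) (P : NC K A) : ℕ :=
  Finset.sup (Finsupp.support P.coeff) (trailCount A a)

/-- The polynomial `P_i` in the decomposition `P = ∑ P_i b a^i`: it collects (and strips
the suffix `b a^i` from) the monomials of `P` with exactly `i` trailing `a`'s. -/
def partBA (a b : A) (i : ℕ) (P : NC K A) : NC K A :=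
  Finsupp.sum P.coeff fun v c =>
    if (FreeMonoid.toList v).reverse.take (i + 1) = List.replicate i a ++ [b] then
      c • wp K A ((FreeMonoid.toList v).take ((FreeMonoid.toList v).length - (i + 1)))
    else 0

/-- A word is Lyndon if it is nonempty and strictly smaller, in the lexicographic order,
than each of its proper nonempty right factors. -/
def IsLyndon {A : Type*} [LinearOrder A] (w : List A) : Prop :=
  w ≠ [] ∧ ∀ s t : List A, w = t ++ s → t ≠ [] → s ≠ [] → List.Lex (· < ·) w s

/-- `γ(w)`: the nonnegative generator of the ideal `{(P, w) : P ∈ L_ℤ(A)}` of `ℤ`. -/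
def gammaW (A : Type*) (w : List A) : ℤ :=
  haveI : (Ideal.span {c : ℤ | ∃ P ∈ freeLie ℤ A, coeffW ℤ A P w = c}).IsPrincipal :=
    IsPrincipalIdealRing.principal _
  (Submodule.IsPrincipal.generator
    (Ideal.span {c : ℤ | ∃ P ∈ freeLie ℤ A, coeffW ℤ A P w = c})).natAbs

end

/-!
`λ` is the adjoint of the left-normed bracketing `ℓ`: the coefficient of `v` in `λ(u)` is the
coefficient of `u` in `ℓ(v)`, as both sides satisfy the same recursion in `u = a u' b`. The
`ℓ(v)` span `L_K(A)`: their span is stable under bracketing with a letter, hence, by the Jacobi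
identity, under bracketing with every `ℓ(v)`, so it is a Lie subalgebra. Therefore `λ(P) = 0` iff
`P` is orthogonal to every `ℓ(v)` iff `P ⊥ L_K(A)`; the statement on words is the case `P = w`.
-/

namespace LieSubalgebra

variable {R L : Type*} [CommRing R] [LieRing L] [LieAlgebra R L]

theorem coe_lieSpan_eq_span_of_forall_lie_mem_span {s : Set L}
    (hs : ∀ x ∈ s, ∀ y ∈ s, ⁅x, y⁆ ∈ Submodule.span R s) :
    (lieSpan R L s : Submodule R L) = Submodule.span R s := by
  have hclosed : ∀ x ∈ Submodule.span R s, ∀ y ∈ Submodule.span R s,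
      (LieAlgebra.ad R L : L →ₗ[R] Module.End R L) x y ∈ Submodule.span R s := by
    rw [← Submodule.map₂_le, Submodule.map₂_span_span, Submodule.span_le]
    rintro _ ⟨x, hx, y, hy, rfl⟩
    exact hs x hx y hy
  refine le_antisymm ?_ submodule_span_le_lieSpan
  change _ ≤ ({ Submodule.span R s with lie_mem' := fun hx hy => hclosed _ hx _ hy } :
    LieSubalgebra R L)
  rw [lieSpan_le]
  exact Submodule.subset_span

end LieSubalgebra

noncomputable section

variable (K A : Type*) [CommRing K]
open FreeMonoid

theorem coeff_wp (u v : List A) :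
    (wp K A u).coeff (ofList v) = if v = u then 1 else 0 := by
  simp [wp, Finsupp.single_apply, eq_comm]

theorem coeff_mul_wp_singleton (P : NC K A) (c : A) (w : List A) :
    (P * wp K A [c]).coeff (ofList w) =
      if w.getLast? = some c then P.coeff (ofList w.dropLast) else 0 := by
  rcases List.eq_nil_or_concat' w with rfl | ⟨v, d, rfl⟩
  · refine MonoidAlgebra.coeff_mul_single_of_forall_mul_ne _ _ fun m h => ?_
    simpa using congrArg (fun m => (toList m).length) h
  · obtain rfl | hdc := eq_or_ne d c
    · simp [wp]
    · rw [List.getLast?_concat, if_neg (by simpa using hdc)]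
      refine MonoidAlgebra.coeff_mul_single_of_forall_mul_ne _ _ fun m h => hdc ?_
      simpa [toList_mul] using (congrArg (fun m => (toList m).getLast?) h).symm

theorem coeff_wp_singleton_mul (P : NC K A) (c : A) (w : List A) :
    (wp K A [c] * P).coeff (ofList w) =
      if w.head? = some c then P.coeff (ofList w.tail) else 0 := by
  rcases w with _ | ⟨d, v⟩
  · refine MonoidAlgebra.coeff_single_mul_of_forall_mul_ne _ _ fun m h => ?_
    simpa using congrArg (fun m => (toList m).length) h
  · obtain rfl | hdc := eq_or_ne d c
    · simp [wp]
    · rw [List.head?_cons, if_neg (by simpa using hdc)]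
      refine MonoidAlgebra.coeff_single_mul_of_forall_mul_ne _ _ fun m h => hdc ?_
      simpa [toList_mul] using (congrArg (fun m => (toList m).head?) h).symm

theorem coeff_lie_wp_singleton (P : NC K A) (c : A) (w : List A) :
    (⁅P, wp K A [c]⁆).coeff (ofList w) =
      (if w.getLast? = some c then P.coeff (ofList w.dropLast) else 0) -
        if w.head? = some c then P.coeff (ofList w.tail) else 0 := by
  rw [Ring.lie_def, MonoidAlgebra.coeff_sub, Finsupp.sub_apply, coeff_mul_wp_singleton,
    coeff_wp_singleton_mul]

def ell : List A → NC K A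
  | [] => 0
  | a :: v => v.foldl (fun P b => ⁅P, wp K A [b]⁆) (wp K A [a])

@[simp] theorem ell_nil : ell K A [] = 0 := rfl

@[simp] theorem ell_singleton (a : A) : ell K A [a] = wp K A [a] := rfl

theorem ell_append_singleton {v : List A} (hv : v ≠ []) (c : A) :
    ell K A (v ++ [c]) = ⁅ell K A v, wp K A [c]⁆ := by
  obtain ⟨a, v, rfl⟩ := List.exists_cons_of_ne_nil hv
  simp [ell, List.foldl_append]

theorem coeff_ell_nil (v : List A) : (ell K A v).coeff (ofList []) = 0 := by
  induction v using List.reverseRecOn with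
  | nil => rfl
  | append_singleton v c _ =>
    rcases eq_or_ne v [] with rfl | hv
    · rw [List.nil_append, ell_singleton, coeff_wp, if_neg (List.cons_ne_nil c []).symm]
    · rw [ell_append_singleton K A hv, coeff_lie_wp_singleton]
      simp

theorem coeff_ell_singleton (v : List A) (a : A) :
    (ell K A v).coeff (ofList [a]) = if v = [a] then 1 else 0 := by
  induction v using List.reverseRecOn with
  | nil => rfl
  | append_singleton v c _ =>
    rcases eq_or_ne v [] with rfl | hv
    · rw [List.nil_append, ell_singleton, coeff_wp]
      exact if_congr eq_comm rfl rfl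
    · rw [ell_append_singleton K A hv, coeff_lie_wp_singleton]
      simp [hv, List.append_eq_singleton_iff]

theorem lam_cons_append_singleton (a c : A) (s : List A) :
    lam K A (a :: s ++ [c]) =
      lam K A (a :: s) * wp K A [c] - lam K A (s ++ [c]) * wp K A [a] := by
  cases s with
  | nil => simp [lam]
  | cons b t =>
    rw [List.cons_append, List.cons_append, lam]
    have hdrop : (b :: (t ++ [c])).dropLast = b :: t := by
      rw [← List.cons_append, List.dropLast_concat]
    simp [hdrop]

theorem coeff_lam_eq_coeff_ell (u v : List A) :
    (lam K A u).coeff (ofList v) = (ell K A v).coeff (ofList u) := by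
  match u with
  | [] => rw [lam, coeff_ell_nil]; rfl
  | [a] => rw [lam, coeff_wp, coeff_ell_singleton]
  | a :: b :: t =>
    obtain ⟨s, c, hsc⟩ := (List.eq_nil_or_concat' (b :: t)).resolve_left (List.cons_ne_nil b t)
    have ih₁ := coeff_lam_eq_coeff_ell (a :: s)
    have ih₂ := coeff_lam_eq_coeff_ell (s ++ [c])
    rw [show a :: b :: t = a :: s ++ [c] by rw [hsc, List.cons_append], lam_cons_append_singleton,
      MonoidAlgebra.coeff_sub, Finsupp.sub_apply, coeff_mul_wp_singleton, coeff_mul_wp_singleton,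
      ih₁, ih₂]
    rcases List.eq_nil_or_concat' v with rfl | ⟨v, d, rfl⟩
    · simp
    rcases eq_or_ne v [] with rfl | hv
    · rw [List.nil_append, ell_singleton, coeff_wp]
      simp
    rw [ell_append_singleton K A hv, coeff_lie_wp_singleton, List.getLast?_concat,
      List.dropLast_concat, List.getLast?_concat, List.dropLast_concat]
    simp only [List.cons_append, List.head?_cons, List.tail_cons, Option.some.injEq, eq_comm]
  termination_by u.length
  decreasing_by all_goals simp [hsc]

theorem ell_mem_freeLie (v : List A) : ell K A v ∈ freeLie K A := by
  induction v using List.reverseRecOn with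
  | nil => exact zero_mem _
  | append_singleton v c ih =>
    rcases eq_or_ne v [] with rfl | hv
    · exact LieSubalgebra.subset_lieSpan ⟨c, rfl⟩
    · rw [ell_append_singleton K A hv]
      exact LieSubalgebra.lie_mem _ ih (LieSubalgebra.subset_lieSpan ⟨c, rfl⟩)

theorem lie_wp_singleton_mem_span_ell {x : NC K A}
    (hx : x ∈ Submodule.span K (Set.range (ell K A))) (c : A) :
    ⁅x, wp K A [c]⁆ ∈ Submodule.span K (Set.range (ell K A)) := by
  induction hx using Submodule.span_induction with
  | mem _ hx =>
    obtain ⟨v, rfl⟩ := hx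
    rcases eq_or_ne v [] with rfl | hv
    · rw [ell_nil, zero_lie]
      exact zero_mem _
    · rw [← ell_append_singleton K A hv]
      exact Submodule.subset_span ⟨_, rfl⟩
  | zero => rw [zero_lie]; exact zero_mem _
  | add x y _ _ hx hy => rw [add_lie]; exact add_mem hx hy
  | smul r x _ hx => rw [smul_lie]; exact Submodule.smul_mem _ r hx

theorem lie_ell_mem_span_ell {x : NC K A} (hx : x ∈ Submodule.span K (Set.range (ell K A)))
    (v : List A) : ⁅x, ell K A v⁆ ∈ Submodule.span K (Set.range (ell K A)) := by
  induction v using List.reverseRecOn generalizing x with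
  | nil => rw [ell_nil, lie_zero]; exact zero_mem _
  | append_singleton v c ih =>
    rcases eq_or_ne v [] with rfl | hv
    · exact lie_wp_singleton_mem_span_ell K A hx c
    rw [ell_append_singleton K A hv, leibniz_lie, ← lie_skew (ell K A v)]
    exact add_mem (lie_wp_singleton_mem_span_ell K A (ih hx) c)
      (neg_mem (ih (lie_wp_singleton_mem_span_ell K A hx c)))

theorem freeLie_toSubmodule_eq_span_ell :
    (freeLie K A : Submodule K (NC K A)) = Submodule.span K (Set.range (ell K A)) := by
  refine le_antisymm ?_ (Submodule.span_le.mpr (Set.range_subset_iff.mpr (ell_mem_freeLie K A)))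
  rw [← LieSubalgebra.coe_lieSpan_eq_span_of_forall_lie_mem_span]
  · exact LieSubalgebra.lieSpan_mono (Set.range_subset_iff.mpr fun a => ⟨[a], rfl⟩)
  · rintro x hx _ ⟨v, rfl⟩
    exact lie_ell_mem_span_ell K A (Submodule.subset_span hx) v

theorem eq_zero_iff_forall_coeff_ofList (P : NC K A) : P = 0 ↔ ∀ v, P.coeff (ofList v) = 0 := by
  rw [← MonoidAlgebra.coeff_inj, Finsupp.ext_iff, ofList.surjective.forall]
  rfl

def spRight (P : NC K A) : NC K A →ₗ[K] K where
  toFun := sp K A P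
  map_add' Q R := by
    simp only [sp, MonoidAlgebra.coeff_add, Finsupp.add_apply, mul_add, Finsupp.sum_add]
  map_smul' r Q := by
    simp only [sp, MonoidAlgebra.coeff_smul, Finsupp.smul_apply, smul_eq_mul, Finsupp.mul_sum,
      RingHom.id_apply, mul_left_comm]

theorem forall_mem_freeLie_sp_eq_zero_iff (P : NC K A) :
    (∀ Q ∈ freeLie K A, sp K A P Q = 0) ↔ ∀ v, sp K A P (ell K A v) = 0 := by
  change (freeLie K A : Submodule K (NC K A)) ≤ LinearMap.ker (spRight K A P) ↔ _
  rw [freeLie_toSubmodule_eq_span_ell, Submodule.span_le, Set.range_subset_iff]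
  rfl

theorem coeff_lamLin (P : NC K A) (v : List A) :
    (lamLin K A P).coeff (ofList v) = sp K A P (ell K A v) := by
  rw [lamLin, LinearMap.comp_apply, LinearEquiv.coe_coe, Finsupp.linearCombination_apply, sp,
    MonoidAlgebra.coeff_finsuppSum, Finsupp.sum_apply]
  refine Finsupp.sum_congr fun w _ => ?_
  rw [MonoidAlgebra.coeff_smul_apply, smul_eq_mul, coeff_lam_eq_coeff_ell, ofList_toList]

theorem lamLin_wp (w : List A) : lamLin K A (wp K A w) = lam K A w := by
  simp [lamLin, wp]

theorem sp_wp (w : List A) (Q : NC K A) : sp K A (wp K A w) Q = coeffW K A Q w := by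
  simp [sp, wp, coeffW]

end

theorem ker_lam_eq_orthogonal_freeLie_general
    (K A : Type*) [CommRing K] :
    (∀ P : NC K A, lamLin K A P = 0 ↔ ∀ Q ∈ freeLie K A, sp K A P Q = 0) ∧
    (∀ w : List A, lam K A w = 0 ↔ ¬ ∃ P ∈ freeLie K A, coeffW K A P w ≠ 0) := by
  have hker (P : NC K A) : lamLin K A P = 0 ↔ ∀ Q ∈ freeLie K A, sp K A P Q = 0 := by
    simp only [eq_zero_iff_forall_coeff_ofList, coeff_lamLin, forall_mem_freeLie_sp_eq_zero_iff]
  refine ⟨hker, fun w => ?_⟩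
  rw [← lamLin_wp, hker]
  simp [sp_wp]

theorem ker_lam_eq_orthogonal_freeLie
    (K A : Type*) [CommRing K] [Fintype A] :
    (∀ P : NC K A, lamLin K A P = 0 ↔ ∀ Q ∈ freeLie K A, sp K A P Q = 0) ∧
    (∀ w : List A, lam K A w = 0 ↔ ¬ ∃ P ∈ freeLie K A, coeffW K A P w ≠ 0) :=
  ker_lam_eq_orthogonal_freeLie_general K A
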